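/- arXiv:1902.07160 — 2 statements merged into one kernel-verified Lean document; each statement's English description precedes it below -/
import Mathlib

section
/- The function f(θ) = (1 + 1/cos θ)(1 + 1/sin θ) on (0, π/2) attains its minimum value 3 + 2√2 uniquely at θ = π/4; i.e., among all unit right triangles, the isosceles one has minimum area, equal to 3 + 2√2. -/
open Real Set

/-! Writing `s = sin θ`, `c = cos θ` and `p = s + c`, the relation `s² + c² = 1` gives `2 s c = p² - 1`,
so `(1 + 1/c)(1 + 1/s) = 1 + 2 / (p - 1)`. This is strictly decreasing in `p > 1`, and
`p = √2 cos (θ - π/4) ≤ √2` with equality exactly at `θ = π/4`, where the value is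
`1 + 2 / (√2 - 1) = 3 + 2√2`. -/

lemma sin_add_cos_eq_sqrt_two_mul_cos_sub_pi_div_four (θ : ℝ) :
    sin θ + cos θ = √2 * cos (θ - π / 4) := by
  rw [cos_sub, cos_pi_div_four, sin_pi_div_four]
  ring_nf
  rw [sq_sqrt zero_le_two]
  ring

lemma sin_add_cos_le_sqrt_two (θ : ℝ) : sin θ + cos θ ≤ √2 := by
  rw [sin_add_cos_eq_sqrt_two_mul_cos_sub_pi_div_four]
  exact mul_le_of_le_one_right (sqrt_nonneg 2) (cos_le_one _)

lemma sin_add_cos_eq_sqrt_two_iff {θ : ℝ} (h₁ : π / 4 - 2 * π < θ) (h₂ : θ < π / 4 + 2 * π) :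
    sin θ + cos θ = √2 ↔ θ = π / 4 := by
  rw [sin_add_cos_eq_sqrt_two_mul_cos_sub_pi_div_four, mul_eq_left₀ (by positivity),
    cos_eq_one_iff_of_lt_of_lt (by linarith) (by linarith), sub_eq_zero]

lemma one_lt_sin_add_cos {θ : ℝ} (h₀ : 0 < θ) (h₁ : θ < π / 2) : 1 < sin θ + cos θ := by
  have hs : 0 < sin θ := sin_pos_of_pos_of_lt_pi h₀ (by linarith [pi_pos])
  have hc : 0 < cos θ := cos_pos_of_mem_Ioo ⟨by linarith, h₁⟩
  nlinarith [sin_sq_add_cos_sq θ, mul_pos hs hc]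

lemma one_add_inv_mul_one_add_inv_of_sq_add_sq_eq_one {s c : ℝ} (hs : s ≠ 0) (hc : c ≠ 0)
    (h : s ^ 2 + c ^ 2 = 1) : (1 + 1 / c) * (1 + 1 / s) = 1 + 2 / (s + c - 1) := by
  have hp : s + c - 1 ≠ 0 := by
    intro hp
    apply mul_ne_zero hs hc
    linear_combination (hp * (s + c + 1) - h) / 2
  field_simp
  linear_combination h

lemma strictAntiOn_one_add_two_div_sub_one :
    StrictAntiOn (fun p : ℝ => 1 + 2 / (p - 1)) (Ioi 1) := by
  intro a ha b _ hab
  have : 0 < a - 1 := sub_pos.mpr ha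
  dsimp only
  gcongr

lemma one_add_two_div_sqrt_two_sub_one : 1 + 2 / (√2 - 1) = 3 + 2 * √2 := by
  have h : √2 - 1 ≠ 0 := by
    rw [sub_ne_zero]; exact (one_lt_sqrt_two).ne'
  field_simp
  ring_nf
  rw [sq_sqrt zero_le_two]
  ring

theorem unit_right_triangle_min_area
    (f : ℝ → ℝ) (hf : ∀ θ, f θ = (1 + 1 / cos θ) * (1 + 1 / sin θ)) :
    f (π / 4) = 3 + 2 * Real.sqrt 2 ∧
    ∀ θ : ℝ, 0 < θ → θ < π / 2 →
      (3 + 2 * Real.sqrt 2 ≤ f θ ∧ (f θ = 3 + 2 * Real.sqrt 2 ↔ θ = π / 4)) := by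
  set g : ℝ → ℝ := fun p => 1 + 2 / (p - 1)
  have hf' : ∀ θ, 0 < θ → θ < π / 2 → f θ = g (sin θ + cos θ) := fun θ h₀ h₁ => by
    have hs : sin θ ≠ 0 := (sin_pos_of_pos_of_lt_pi h₀ (by linarith [pi_pos])).ne'
    have hc : cos θ ≠ 0 := (cos_pos_of_mem_Ioo ⟨by linarith, h₁⟩).ne'
    rw [hf, one_add_inv_mul_one_add_inv_of_sq_add_sq_eq_one hs hc (sin_sq_add_cos_sq θ)]
  have hiff : ∀ θ, 0 < θ → θ < π / 2 → (sin θ + cos θ = √2 ↔ θ = π / 4) := fun θ h₀ h₁ =>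
    sin_add_cos_eq_sqrt_two_iff (by linarith [pi_pos]) (by linarith [pi_pos])
  have hπ₀ : 0 < π / 4 := by positivity
  have hπ₁ : π / 4 < π / 2 := by linarith [pi_pos]
  rw [← one_add_two_div_sqrt_two_sub_one]
  refine ⟨by rw [hf' _ hπ₀ hπ₁, (hiff _ hπ₀ hπ₁).mpr rfl], fun θ h₀ h₁ => ?_⟩
  have hp : sin θ + cos θ ∈ Ioi 1 := one_lt_sin_add_cos h₀ h₁
  have hsqrt : √2 ∈ Ioi 1 := one_lt_sqrt_two
  rw [hf' θ h₀ h₁, ← hiff θ h₀ h₁]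
  exact ⟨strictAntiOn_one_add_two_div_sub_one.antitoneOn hp hsqrt (sin_add_cos_le_sqrt_two θ),
    strictAntiOn_one_add_two_div_sub_one.injOn.eq_iff hp hsqrt⟩
end

section
/- For a triangle-friendly pair (r, s) (meaning 0 < r ≤ 1, 0 < s ≤ 1, r + s > 1), the fundamental measure Π(r,s) = (r+s+1)^(3/2) / ((-r+s+1)^(1/2) (r-s+1)^(1/2) (r+s-1)^(1/2)) attains its minimum value 3√3 uniquely at r = s = 1 (the equilateral triangle). -/
/-! With `x = -r + s + 1`, `y = r - s + 1`, `z = r + s - 1` (positive exactly for triangle-friendly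
pairs) one has `x + y + z = r + s + 1`, so `Π(r,s)² = (x + y + z)³ / (x y z)`. By AM-GM this is at
least `27`, with equality iff `x = y = z`, i.e. `r = s = 1`. -/

open Real

namespace Real

theorem rpow_three_halves_div_rpow_half {p q : ℝ} (hp : 0 ≤ p) :
    p ^ ((3 : ℝ) / 2) / q ^ ((1 : ℝ) / 2) = √(p ^ 3 / q) := by
  rw [sqrt_div (pow_nonneg hp 3), sqrt_eq_rpow, sqrt_eq_rpow, ← rpow_natCast, ← rpow_mul hp]
  norm_num

end Real

section AMGM

variable {x y z : ℝ}

theorem add_pow_three_sub_mul_mul (x y z : ℝ) :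
    (x + y + z) ^ 3 - 27 * (x * y * z) =
      ((x + y + z) / 2 + 3 * x) * (y - z) ^ 2 + ((x + y + z) / 2 + 3 * y) * (z - x) ^ 2 +
        ((x + y + z) / 2 + 3 * z) * (x - y) ^ 2 := by
  ring

theorem mul_mul_le_add_pow_three (hx : 0 ≤ x) (hy : 0 ≤ y) (hz : 0 ≤ z) :
    27 * (x * y * z) ≤ (x + y + z) ^ 3 := by
  have := add_pow_three_sub_mul_mul x y z
  have : 0 ≤ ((x + y + z) / 2 + 3 * x) * (y - z) ^ 2 + ((x + y + z) / 2 + 3 * y) * (z - x) ^ 2 +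
      ((x + y + z) / 2 + 3 * z) * (x - y) ^ 2 := by positivity
  linarith

theorem mul_mul_eq_add_pow_three_iff (hx : 0 < x) (hy : 0 < y) (hz : 0 < z) :
    27 * (x * y * z) = (x + y + z) ^ 3 ↔ x = y ∧ y = z := by
  refine ⟨fun h => ?_, fun ⟨rfl, rfl⟩ => by ring⟩
  have hsum := add_pow_three_sub_mul_mul x y z
  have hyz : 0 ≤ ((x + y + z) / 2 + 3 * x) * (y - z) ^ 2 := by positivity
  have hzx : 0 ≤ ((x + y + z) / 2 + 3 * y) * (z - x) ^ 2 := by positivity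
  have hxy : 0 ≤ ((x + y + z) / 2 + 3 * z) * (x - y) ^ 2 := by positivity
  have hxy0 : (x - y) ^ 2 = 0 :=
    (mul_eq_zero.mp (by linarith : ((x + y + z) / 2 + 3 * z) * (x - y) ^ 2 = 0)).resolve_left
      (by positivity)
  have hyz0 : (y - z) ^ 2 = 0 :=
    (mul_eq_zero.mp (by linarith : ((x + y + z) / 2 + 3 * x) * (y - z) ^ 2 = 0)).resolve_left
      (by positivity)
  constructor
  · linarith [pow_eq_zero_iff (n := 2) (by norm_num) |>.mp hxy0]
  · linarith [pow_eq_zero_iff (n := 2) (by norm_num) |>.mp hyz0]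

theorem sqrt_twentySeven_le_sqrt_add_pow_three_div (hx : 0 < x) (hy : 0 < y) (hz : 0 < z) :
    √27 ≤ √((x + y + z) ^ 3 / (x * y * z)) := by
  gcongr
  rw [le_div_iff₀ (by positivity)]
  exact mul_mul_le_add_pow_three hx.le hy.le hz.le

theorem sqrt_add_pow_three_div_eq_sqrt_twentySeven_iff (hx : 0 < x) (hy : 0 < y) (hz : 0 < z) :
    √((x + y + z) ^ 3 / (x * y * z)) = √27 ↔ x = y ∧ y = z := by
  rw [sqrt_inj (by positivity) (by norm_num), div_eq_iff (by positivity), eq_comm]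
  exact mul_mul_eq_add_pow_three_iff hx hy hz

end AMGM

theorem three_mul_sqrt_three : 3 * √3 = √27 := by
  rw [show (27 : ℝ) = 3 ^ 2 * 3 by norm_num, sqrt_mul (by positivity), sqrt_sq (by norm_num)]

theorem unit_triangle_min_area
    (Pi : ℝ → ℝ → ℝ)
    (hPi : ∀ r s, Pi r s =
      (r + s + 1) ^ ((3 : ℝ) / 2) /
        (((-r + s + 1) * (r - s + 1) * (r + s - 1)) ^ ((1 : ℝ) / 2))) :
    Pi 1 1 = 3 * Real.sqrt 3 ∧
    ∀ r s : ℝ, 0 < r → 0 < s → r ≤ 1 → s ≤ 1 → 1 < r + s →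
      (3 * Real.sqrt 3 ≤ Pi r s ∧
        (Pi r s = 3 * Real.sqrt 3 ↔ r = 1 ∧ s = 1)) := by
  have key : ∀ r s : ℝ, 0 < r → 0 < s → r ≤ 1 → s ≤ 1 → 1 < r + s →
      (3 * √3 ≤ Pi r s ∧ (Pi r s = 3 * √3 ↔ r = 1 ∧ s = 1)) := by
    intro r s hr hs hr1 hs1 hrs
    have hx : 0 < -r + s + 1 := by linarith
    have hy : 0 < r - s + 1 := by linarith
    have hz : 0 < r + s - 1 := by linarith
    have hPirs : Pi r s = √(((-r + s + 1) + (r - s + 1) + (r + s - 1)) ^ 3 /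
        ((-r + s + 1) * (r - s + 1) * (r + s - 1))) := by
      rw [hPi, rpow_three_halves_div_rpow_half (by linarith)]
      ring_nf
    rw [hPirs, three_mul_sqrt_three, sqrt_add_pow_three_div_eq_sqrt_twentySeven_iff hx hy hz]
    refine ⟨sqrt_twentySeven_le_sqrt_add_pow_three_div hx hy hz, ?_⟩
    constructor
    · rintro ⟨hxy, hyz⟩
      constructor <;> linarith
    · rintro ⟨rfl, rfl⟩
      norm_num
  exact ⟨((key 1 1 one_pos one_pos le_rfl le_rfl (by norm_num)).2).2 ⟨rfl, rfl⟩, key⟩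
end
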